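/- arXiv:2402.05918 — 2 statements merged into one kernel-verified Lean document; each statement's English description precedes it below -/
import Mathlib

section
/- The transfer function M(s) = −(s + n − 1)/((s + 1)(s + n)), arising from perturbing the edge weight w_{12} in an unweighted star graph on n ≥ 2 nodes, satisfies: M(jω) is real negative only at ω = 0 (i.e., ω = 0 is the unique phase-crossover frequency), and the gain margin 1/|M(0)| equals n/(n − 1). -/
/-!
Multiplying by the conjugate of the denominator gives
`Im M(jω) = ω (ω² + n² - n - 1) / ((1 + ω²)(n² + ω²))`, which is positive for every `ω > 0`
as soon as `n² ≥ n + 1`; so `M(jω)` is never real for `ω > 0`. At `ω = 0`, `M(0) = -(n - 1)/n`.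
-/

open Complex

noncomputable def starEdgeTransfer (a : ℝ) (s : ℂ) : ℂ :=
  -(s + a - 1) / ((s + 1) * (s + a))

lemma starEdgeTransfer_im_mul_I (a ω : ℝ) :
    (starEdgeTransfer a (ω * I)).im
      = ω * (ω ^ 2 + a ^ 2 - a - 1) / ((1 + ω ^ 2) * (a ^ 2 + ω ^ 2)) := by
  rw [starEdgeTransfer, div_im, normSq_apply]
  simp only [neg_sub, sub_im, one_im, add_im, mul_im, ofReal_re, I_im, mul_one, ofReal_im, I_re,
    mul_zero, add_zero, zero_sub, mul_re, add_re, sub_self, one_re, zero_add, one_mul, neg_mul, sub_re]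
  ring

lemma starEdgeTransfer_im_mul_I_pos {a ω : ℝ} (ha : a + 1 ≤ a ^ 2) (hω : 0 < ω) :
    0 < (starEdgeTransfer a (ω * I)).im := by
  have : 0 < ω ^ 2 + a ^ 2 - a - 1 := by nlinarith
  rw [starEdgeTransfer_im_mul_I]
  positivity

lemma norm_starEdgeTransfer_zero {a : ℝ} (ha : 1 ≤ a) :
    ‖starEdgeTransfer a 0‖ = (a - 1) / a := by
  have h : starEdgeTransfer a 0 = ((-(a - 1) / a : ℝ) : ℂ) := by
    rw [starEdgeTransfer]
    push_cast
    ring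
  rw [h, norm_real, Real.norm_eq_abs, abs_div, abs_neg, abs_of_nonneg (by linarith),
    abs_of_pos (by linarith)]

/-- For `M(s) = -(s + n - 1)/((s + 1)(s + n))` with `n ≥ 2`: the only
phase-crossover frequency (`ω ≥ 0` with `M(jω)` real and negative) is `ω = 0`,
and the gain margin `1/|M(0)|` equals `n/(n - 1)`. -/
theorem star_edge12_gain_margin
    (n : ℕ) (hn : 2 ≤ n)
    (M : ℂ → ℂ)
    (hM : ∀ s : ℂ, M s = -(s + (n : ℂ) - 1) / ((s + 1) * (s + (n : ℂ)))) :
    (∀ ω : ℝ, 0 ≤ ω →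
      (M (ω * Complex.I)).im = 0 → (M (ω * Complex.I)).re < 0 → ω = 0) ∧
      1 / ‖M 0‖ = (n : ℝ) / ((n : ℝ) - 1) := by
  have hM' : M = starEdgeTransfer n := funext fun s => by
    rw [hM, starEdgeTransfer, ofReal_natCast]
  subst hM'
  have hn' : (2 : ℝ) ≤ n := by exact_mod_cast hn
  refine ⟨fun ω hω him _ => ?_, ?_⟩
  · by_contra hne
    have hpos := starEdgeTransfer_im_mul_I_pos (a := n) (by nlinarith) (hω.lt_of_ne' hne)
    linarith
  · rw [norm_starEdgeTransfer_zero (by linarith), one_div_div]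
end

section
/- Suppose the error variables e_i satisfy ė = −L e, where L ∈ ℝ^{n×n} has a simple eigenvalue 0 with right eigenvector 1 and all other eigenvalues with strictly positive real part. Then e(t) converges to (pᵀe(0)/(pᵀ1))·1 as t → ∞, where p spans the null space of Lᵀ and pᵀ1 ≠ 0. -/
/-
Complexify and write the solution as `e t = exp (-t • L) (e 0)`. Decompose `e 0` into
generalized eigenvectors of `L`. On the generalized eigenspace of `μ`, `exp (-t • L)` acts as
`exp (-t μ)` times a polynomial in `t`, so the components with `μ ≠ 0` decay because `0 < re μ`.
Since `0` is algebraically simple and `L 1 = 0`, its generalized eigenspace is the line through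
`1`, on which `exp (-t • L)` is the identity; hence `e t → c • 1`. Finally `pᵀ L = 0` makes
`pᵀ e t` constant, so `c * pᵀ 1 = pᵀ e 0`.
-/

open Matrix Filter NormedSpace Topology

-- `exp_add_of_commute` needs a `ℚ`-algebra structure, obtained here by restricting scalars.
theorem exp_add_of_commute_of_complex {𝔸 : Type*} [NormedRing 𝔸] [NormedAlgebra ℂ 𝔸]
    [CompleteSpace 𝔸] {x y : 𝔸} (h : Commute x y) : exp (x + y) = exp x * exp y := by
  let := NormedAlgebra.restrictScalars ℚ ℂ 𝔸
  exact exp_add_of_commute h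

theorem tendsto_cexp_neg_mul_mul_neg_pow_atTop {μ : ℂ} (hμ : 0 < μ.re) (j : ℕ) :
    Tendsto (fun t : ℝ => Complex.exp (-t * μ) * (-t) ^ j) atTop (𝓝 0) := by
  rw [tendsto_zero_iff_norm_tendsto_zero]
  refine (tendsto_rpow_mul_exp_neg_mul_atTop_nhds_zero j μ.re hμ).congr' ?_
  filter_upwards [eventually_ge_atTop 0] with t ht
  simp [Complex.norm_exp, abs_of_nonneg ht, mul_comm]

theorem Module.End.hasEigenvalue_of_mem_maxGenEigenspace {R M : Type*} [CommRing R]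
    [AddCommGroup M] [Module R M] {f : Module.End R M} {μ : R} {v : M}
    (hv : v ∈ f.maxGenEigenspace μ) (hv0 : v ≠ 0) : f.HasEigenvalue μ :=
  (Module.End.hasUnifEigenvalue_iff_hasUnifEigenvalue_one (by simp)).mp
    ((Submodule.ne_bot_iff _).mpr ⟨v, hv, hv0⟩)

theorem Module.End.maxGenEigenspace_zero_eq_span_singleton {K V : Type*} [Field K]
    [AddCommGroup V] [Module K V] [FiniteDimensional K V] (f : Module.End K V) {v : V}
    (hv : f v = 0) (hv0 : v ≠ 0) (hf : f.charpoly.rootMultiplicity 0 = 1) :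
    f.maxGenEigenspace 0 = K ∙ v := by
  symm
  refine Submodule.eq_of_le_of_finrank_le ?_ ?_
  · rw [Submodule.span_singleton_le_iff_mem, Module.End.mem_maxGenEigenspace]
    exact ⟨1, by simpa using hv⟩
  · rw [LinearMap.finrank_maxGenEigenspace_eq, hf, finrank_span_singleton hv0]

section

variable {E : Type*} [NormedAddCommGroup E] [NormedSpace ℂ E] (A : E →L[ℂ] E)

theorem ContinuousLinearMap.exists_pow_sub_smul_apply_eq_zero_of_mem_maxGenEigenspace {μ : ℂ}
    {v : E} (hv : v ∈ Module.End.maxGenEigenspace (A : E →ₗ[ℂ] E) μ) :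
    ∃ k, ((A - μ • (1 : E →L[ℂ] E)) ^ k) v = 0 := by
  obtain ⟨k, hk⟩ := (Module.End.mem_maxGenEigenspace _ _ _).mp hv
  refine ⟨k, ?_⟩
  rwa [← ContinuousLinearMap.toLinearMap_one, ← ContinuousLinearMap.toLinearMap_smul,
    ← ContinuousLinearMap.toLinearMap_sub, ← ContinuousLinearMap.toLinearMap_pow,
    ContinuousLinearMap.coe_coe] at hk

variable [CompleteSpace E]

theorem exp_smul_apply_eq_sum_of_pow_sub_smul_apply_eq_zero {μ : ℂ} {k : ℕ} {v : E}
    (hv : ((A - μ • 1) ^ k) v = 0) (z : ℂ) :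
    exp (z • A) v =
      Complex.exp (z * μ) • ∑ j ∈ Finset.range k, (z ^ j / j.factorial) • ((A - μ • 1) ^ j) v := by
  set N := A - μ • (1 : E →L[ℂ] E)
  have hsplit : z • A = (z * μ) • (1 : E →L[ℂ] E) + z • N := by
    simp only [N, smul_sub, smul_smul]; abel
  have hcomm : Commute ((z * μ) • (1 : E →L[ℂ] E)) (z • N) :=
    ((Commute.one_left N).smul_left _).smul_right _
  have hscalar : exp ((z * μ) • (1 : E →L[ℂ] E)) = Complex.exp (z * μ) • 1 := by
    rw [← Algebra.algebraMap_eq_smul_one, ← algebraMap_exp_comm, Complex.exp_eq_exp_ℂ,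
      Algebra.algebraMap_eq_smul_one]
  have hnil : ∀ j ∉ Finset.range k, (z ^ j / j.factorial) • (N ^ j) v = 0 := by
    intro j hj
    obtain ⟨i, rfl⟩ := Nat.exists_eq_add_of_le' (not_lt.mp (Finset.mem_range.not.mp hj))
    rw [pow_add N i k, mul_apply_eq_comp, hv, map_zero, smul_zero]
  have hsum : HasSum (fun j => (z ^ j / j.factorial) • (N ^ j) v) (exp (z • N) v) := by
    simpa [smul_pow, smul_smul, div_eq_inv_mul] using
      (exp_series_hasSum_exp' (𝕂 := ℂ) (z • N)).mapL (ContinuousLinearMap.apply ℂ E v)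
  rw [hsplit, exp_add_of_commute_of_complex hcomm, hscalar, mul_apply_eq_comp, _root_.smul_apply,
    one_apply_eq_self, hsum.unique (hasSum_sum_of_ne_finset_zero hnil)]

theorem exp_smul_apply_of_apply_eq_zero {v : E} (hv : A v = 0) (z : ℂ) : exp (z • A) v = v := by
  have hv' : ((A - (0 : ℂ) • (1 : E →L[ℂ] E)) ^ 1) v = 0 := by simpa using hv
  simp [exp_smul_apply_eq_sum_of_pow_sub_smul_apply_eq_zero A hv']

theorem tendsto_exp_neg_smul_apply_of_mem_maxGenEigenspace {μ : ℂ} (hμ : 0 < μ.re) {v : E}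
    (hv : v ∈ Module.End.maxGenEigenspace (A : E →ₗ[ℂ] E) μ) :
    Tendsto (fun t : ℝ => exp ((-t : ℂ) • A) v) atTop (𝓝 0) := by
  obtain ⟨k, hk⟩ := A.exists_pow_sub_smul_apply_eq_zero_of_mem_maxGenEigenspace hv
  simp_rw [exp_smul_apply_eq_sum_of_pow_sub_smul_apply_eq_zero A hk, Finset.smul_sum, smul_smul,
    ← mul_div_assoc]
  simpa using tendsto_finsetSum (Finset.range k) fun j _ =>
    ((tendsto_cexp_neg_mul_mul_neg_pow_atTop hμ j).div_const (j.factorial : ℂ)).smul_const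
      (((A - μ • 1) ^ j) v)

theorem exists_mem_maxGenEigenspace_zero_tendsto_exp_neg_smul_apply [FiniteDimensional ℂ E]
    (hspec : ∀ μ : ℂ, Module.End.HasEigenvalue (A : E →ₗ[ℂ] E) μ → μ ≠ 0 → 0 < μ.re)
    (hzero : Module.End.maxGenEigenspace (A : E →ₗ[ℂ] E) 0 ≤ LinearMap.ker (A : E →ₗ[ℂ] E))
    (x : E) :
    ∃ y ∈ Module.End.maxGenEigenspace (A : E →ₗ[ℂ] E) 0,
      Tendsto (fun t : ℝ => exp ((-t : ℂ) • A) x) atTop (𝓝 y) := by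
  obtain ⟨v, hv, rfl⟩ := (Submodule.mem_iSup_iff_exists_finsupp _ x).mp
    ((Module.End.iSup_maxGenEigenspace_eq_top (A : E →ₗ[ℂ] E)).symm ▸ Submodule.mem_top)
  refine ⟨v 0, hv 0, ?_⟩
  have hcomp : ∀ μ ∈ v.support, Tendsto (fun t : ℝ => exp ((-t : ℂ) • A) (v μ)) atTop
      (𝓝 (if μ = 0 then v μ else 0)) := by
    intro μ hμ
    split_ifs with h0
    · subst h0
      simp only [exp_smul_apply_of_apply_eq_zero A (hzero (hv 0))]
      exact tendsto_const_nhds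
    · exact tendsto_exp_neg_smul_apply_of_mem_maxGenEigenspace A
        (hspec μ (Module.End.hasEigenvalue_of_mem_maxGenEigenspace (hv μ)
          (Finsupp.mem_support_iff.mp hμ)) h0)
        (hv μ)
  rw [← Finsupp.sum_ite_self_eq' v 0]
  simpa only [Finsupp.sum, map_sum] using tendsto_finsetSum v.support hcomp

theorem eq_exp_neg_smul_apply_of_hasDerivAt [NormedSpace ℝ E] [IsScalarTower ℝ ℂ E] {x : ℝ → E}
    (hx : ∀ t, HasDerivAt x (-A (x t)) t) (t : ℝ) : x t = exp ((-t : ℂ) • A) (x 0) := by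
  have hexp : ∀ s : ℝ, HasDerivAt (fun s : ℝ => exp ((-s : ℂ) • A) (x 0))
      (-A (exp ((-s : ℂ) • A) (x 0))) s := by
    intro s
    have h := (hasDerivAt_exp_smul_const' (𝕂 := ℂ) A (-s : ℂ)).scomp s
      (hasDerivAt_id s).ofReal_comp.neg
    convert ((ContinuousLinearMap.apply ℂ E (x 0)).restrictScalars ℝ).hasFDerivAt.comp_hasDerivAt
      s h using 1 <;> simp [Function.comp_def]
  have hlip : ∀ _ : ℝ, LipschitzOnWith ‖-A‖₊ (fun y => -A y) Set.univ := fun _ =>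
    (-A).lipschitz.lipschitzOnWith
  have := ODE_solution_unique_univ hlip (fun t => ⟨hx t, Set.mem_univ _⟩)
    (fun t => ⟨hexp t, Set.mem_univ _⟩) (t₀ := 0) (by simp)
  exact congrFun this t

end

theorem Matrix.map_ofReal_mulVec_ofReal {ι : Type*} [Fintype ι] (L : Matrix ι ι ℝ) (v : ι → ℝ) :
    L.map Complex.ofReal *ᵥ (fun i => (v i : ℂ)) = fun i => ((L *ᵥ v) i : ℂ) := by
  ext i
  exact (RingHom.map_mulVec Complex.ofRealHom L v i).symm

theorem Matrix.dotProduct_eq_of_hasDerivAt_neg_mulVec {ι : Type*} [Fintype ι] (L : Matrix ι ι ℝ)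
    {p : ι → ℝ} (hp : vecMul p L = 0) {e : ℝ → ι → ℝ}
    (he : ∀ i t, HasDerivAt (fun s => e s i) (-(L *ᵥ e t) i) t) (t : ℝ) :
    p ⬝ᵥ e t = p ⬝ᵥ e 0 := by
  have hderiv : ∀ s, HasDerivAt (fun s => p ⬝ᵥ e s) 0 s := by
    intro s
    have h0 : p ⬝ᵥ (L *ᵥ e s) = 0 := by rw [dotProduct_mulVec, hp, zero_dotProduct]
    exact (HasDerivAt.fun_sum fun i _ => (he i s).const_mul (p i)).congr_deriv
      (by simpa [dotProduct] using h0)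
  exact is_const_of_deriv_eq_zero (fun s => (hderiv s).differentiableAt)
    (fun s => (hderiv s).deriv) t 0

theorem Matrix.exists_tendsto_const_of_hasDerivAt_neg_mulVec {ι : Type*} [Fintype ι]
    [DecidableEq ι] [Nonempty ι] (L : Matrix ι ι ℝ) (hL1 : L *ᵥ (fun _ => (1 : ℝ)) = 0)
    (hsimple : (L.map Complex.ofReal).charpoly.rootMultiplicity 0 = 1)
    (hspec : ∀ μ : ℂ, (L.map Complex.ofReal).charpoly.IsRoot μ → μ ≠ 0 → 0 < μ.re)
    {e : ℝ → ι → ℝ} (he : ∀ i t, HasDerivAt (fun s => e s i) (-(L *ᵥ e t) i) t) :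
    ∃ c : ℝ, Tendsto e atTop (𝓝 fun _ => c) := by
  set A : (ι → ℂ) →L[ℂ] ι → ℂ := LinearMap.toContinuousLinearMap (toLin' (L.map Complex.ofReal))
  have hL1c : L.map Complex.ofReal *ᵥ (fun _ => (1 : ℂ)) = 0 := by
    simpa [hL1, Pi.zero_def] using L.map_ofReal_mulVec_ofReal fun _ => 1
  have hspan : Module.End.maxGenEigenspace (A : (ι → ℂ) →ₗ[ℂ] ι → ℂ) 0 = ℂ ∙ fun _ => 1 :=
    Module.End.maxGenEigenspace_zero_eq_span_singleton _ (by simpa [A] using hL1c)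
      (Function.const_ne_zero.mpr one_ne_zero) (by simpa [A] using hsimple)
  set ec : ℝ → ι → ℂ := fun t i => e t i
  have hec : ∀ t, HasDerivAt ec (-A (ec t)) t := by
    intro t
    rw [hasDerivAt_pi]
    intro i
    simpa [ec, A, Matrix.map_ofReal_mulVec_ofReal] using (he i t).ofReal_comp
  obtain ⟨y, hy, hlim⟩ := exists_mem_maxGenEigenspace_zero_tendsto_exp_neg_smul_apply A
    (fun μ hμ => hspec μ <| by
      simpa [A] using (Module.End.hasEigenvalue_iff_isRoot_charpoly _ _).mp hμ)
    (by rw [hspan, Submodule.span_singleton_le_iff_mem]; simpa [A] using hL1c) (ec 0)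
  obtain ⟨a, rfl⟩ := Submodule.mem_span_singleton.mp (hspan ▸ hy)
  refine ⟨a.re, ?_⟩
  have hec_lim : Tendsto ec atTop (𝓝 (a • fun _ => 1)) := by
    simpa only [← eq_exp_neg_smul_apply_of_hasDerivAt A hec] using hlim
  have hre : Continuous fun v : ι → ℂ => fun i => (v i).re := by fun_prop
  simpa [ec, Function.comp_def] using (hre.tendsto _).comp hec_lim

theorem consensus_convergence_general
    {n : ℕ} (L : Matrix (Fin n) (Fin n) ℝ)
    (hL1 : L.mulVec (fun _ => (1 : ℝ)) = 0)
    (hsimple : ((L.map (Complex.ofReal)).charpoly).rootMultiplicity 0 = 1)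
    (hspec : ∀ μ : ℂ, ((L.map (Complex.ofReal)).charpoly).IsRoot μ → μ ≠ 0 →
      0 < μ.re)
    (p : Fin n → ℝ) (hp : Matrix.vecMul p L = 0)
    (hp1 : (∑ i, p i) ≠ 0)
    (e : ℝ → Fin n → ℝ)
    (he : ∀ (i : Fin n) (t : ℝ),
      HasDerivAt (fun s => e s i) (-(L.mulVec (e t)) i) t) :
    Tendsto e atTop
      (nhds (fun _ => (∑ i, p i * e 0 i) / (∑ i, p i))) := by
  obtain ⟨i₀, -, -⟩ := Finset.exists_ne_zero_of_sum_ne_zero hp1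
  have : Nonempty (Fin n) := ⟨i₀⟩
  obtain ⟨c, hc⟩ := L.exists_tendsto_const_of_hasDerivAt_neg_mulVec hL1 hsimple hspec he
  have hpc : p ⬝ᵥ (fun _ => c) = p ⬝ᵥ e 0 :=
    tendsto_nhds_unique (((continuous_const.dotProduct continuous_id).tendsto _).comp hc)
      (tendsto_const_nhds.congr fun t => (L.dotProduct_eq_of_hasDerivAt_neg_mulVec hp he t).symm)
  have hc_eq : c = (∑ i, p i * e 0 i) / ∑ i, p i := by
    rw [eq_div_iff hp1]
    simpa [dotProduct, mul_comm, Finset.mul_sum] using hpc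
  rwa [← hc_eq]

/-- If `L·1 = 0`, zero is an algebraically simple eigenvalue of `L`, and every
nonzero eigenvalue of `L` has strictly positive real part, then the solution of
`ė = −L e` converges to `(pᵀe(0)/(pᵀ1))·1`, where `Lᵀp = 0` and `pᵀ1 ≠ 0`. -/
theorem consensus_convergence
    {n : ℕ} (L : Matrix (Fin n) (Fin n) ℝ)
    (hL1 : L.mulVec (fun _ => (1 : ℝ)) = 0)
    (hsimple : ((L.map (Complex.ofReal)).charpoly).rootMultiplicity 0 = 1)
    (hspec : ∀ μ : ℂ, ((L.map (Complex.ofReal)).charpoly).IsRoot μ → μ ≠ 0 →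
      0 < μ.re)
    (p : Fin n → ℝ) (hp : Matrix.vecMul p L = 0) (hpne : p ≠ 0)
    (hp1 : (∑ i, p i) ≠ 0)
    (e : ℝ → Fin n → ℝ)
    (he : ∀ (i : Fin n) (t : ℝ),
      HasDerivAt (fun s => e s i) (-(L.mulVec (e t)) i) t) :
    Tendsto e atTop
      (nhds (fun _ => (∑ i, p i * e 0 i) / (∑ i, p i))) :=
  consensus_convergence_general L hL1 hsimple hspec p hp hp1 e he
end
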